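/- arXiv:1309.6474 — 4 statements merged into one kernel-verified Lean document; each statement's English description precedes it below -/
import Mathlib

section
/- With two slots of click-through rates θ1 = 1 and θ2 = 0.5, and two players with values v1 = 8, v2 = 6 and equal budgets B1 = B2 = 2, there exists no envy-free assignment, i.e., no allocation of both slots to the two players with per-click prices p1, p2 such that each player i satisfies his budget constraint θ_{s(i)}·p(i) ≤ B_i, gets nonnegative utility θ_{s(i)}(v_i − p(i)) ≥ 0, and does not envy the other player's slot at its price whenever he could afford it. -/
/-- With two slots of CTRs `θ1 = 1, θ2 = 0.5` and two players with values `8, 6` and equal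
budgets `2, 2`, no envy-free assignment exists: there is no bijective allocation `s` of the
two slots to the two players together with nonnegative per-click prices `p` such that each
player respects his budget, gets nonnegative utility, and does not envy the other player's
slot at its price whenever he could afford it. -/
theorem no_envy_free_equal_budgets :
    ¬ ∃ (s : Equiv.Perm (Fin 2)) (p : Fin 2 → ℝ),
      (∀ i, 0 ≤ p i) ∧
      (∀ i : Fin 2, (![(1 : ℝ), 0.5]) (s i) * p i ≤ (![(2 : ℝ), 2]) i) ∧
      (∀ i : Fin 2, 0 ≤ (![(1 : ℝ), 0.5]) (s i) * ((![(8 : ℝ), 6]) i - p i)) ∧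
      (∀ i j : Fin 2, (![(1 : ℝ), 0.5]) (s j) * p j ≤ (![(2 : ℝ), 2]) i →
        (![(1 : ℝ), 0.5]) (s i) * ((![(8 : ℝ), 6]) i - p i) ≥
          (![(1 : ℝ), 0.5]) (s j) * ((![(8 : ℝ), 6]) i - p j)) := by
  rintro ⟨s, p, hp, hb, hu, he⟩
  have h01 := he 0 1
  have h10 := he 1 0
  have hb0 := hb 0
  have hb1 := hb 1
  have hp0 := hp 0
  have hp1 := hp 1
  have hs : s 1 ≠ s 0 := fun h => by simpa using s.injective h
  have hvne : (s 1).val ≠ (s 0).val := fun he => hs (Fin.ext he)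
  have h2 := (s 1).isLt
  have h3 := (s 0).isLt
  rcases (by omega : (s 0).val = 0 ∨ (s 0).val = 1) with h | h
  · have h0 : s 0 = 0 := Fin.ext h
    have h1 : s 1 = 1 := by apply Fin.ext; simp; omega
    simp [h0, h1] at h01 h10 hb0 hb1
    have := h10 hb0
    linarith
  · have h0 : s 0 = 1 := Fin.ext h
    have h1 : s 1 = 0 := by apply Fin.ext; simp; omega
    simp [h0, h1] at h01 h10 hb0 hb1
    have := h01 hb1
    linarith
end

section
/- In any envy-free assignment, for any two assigned players i and j with s(i) < s(j) (i.e., player i occupies a slot with strictly higher click-through rate) and p(j) > p(i) > 0, player j cannot afford slot s(i) at his current price: p(j)·θ_{s(i)} > B_j. -/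
/-- In any envy-free assignment (slots `Fin k` of strictly decreasing positive CTRs `θ`,
assigned injectively to players `a : Fin k → Fin n` at prices `p ≥ 0` satisfying budget
feasibility, individual rationality and no-envy among assigned players), if slot `j1` is
higher than slot `j2` (`j1 < j2`) and `p j2 > p j1 > 0`, then the player at `j2` cannot
afford slot `j1` at his current price: `p j2 * θ j1 > B (a j2)`. -/
theorem envy_free_cannot_afford_higher {n k : ℕ} (θ : Fin k → ℝ) (v B : Fin n → ℝ)
    (a : Fin k → Fin n) (p : Fin k → ℝ)
    (hθpos : ∀ j, 0 < θ j) (hθ : StrictAnti θ)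
    (ha : Function.Injective a) (hp : ∀ j, 0 ≤ p j)
    (hbudget : ∀ j, θ j * p j ≤ B (a j))
    (hrat : ∀ j, 0 ≤ θ j * (v (a j) - p j))
    (hef : ∀ j j' : Fin k, θ j' * p j' ≤ B (a j) →
      θ j * (v (a j) - p j) ≥ θ j' * (v (a j) - p j'))
    (j1 j2 : Fin k) (hlt : j1 < j2) (hpp : p j1 < p j2) (hp1 : 0 < p j1) :
    p j2 * θ j1 > B (a j2) := by
  by_contra h
  push_neg at h
  have hθ12 : θ j2 < θ j1 := hθ hlt
  have hθ2 : 0 < θ j2 := hθpos j2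
  have haff : θ j1 * p j1 ≤ B (a j2) := by nlinarith [hθpos j1]
  have henvy := hef j2 j1 haff
  have hr := hrat j2
  have hv : 0 ≤ v (a j2) - p j2 := by nlinarith
  nlinarith
end

section
/- In BCP with one slot of rate θ1 = 1, two players with values (10, 5) and budgets (5, 3) budget-bidding truthfully, the bid profile (b1, b2) = (5, 4) realizes an envy-free outcome (player 1 gets the slot at price 4), but is not a Nash equilibrium: player 1 strictly improves by deviating to bid 3.5, since then player 2's bid of 4 is highest but player 2 cannot afford the slot at price 3.5, so player 1 gets the slot at price 0. -/
/-- The bid (or other attribute) of the player occupying rank `r` in the ordering `π`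
(rank `0` is the highest bidder); `0` for out-of-range ranks. -/
noncomputable def rankVal {n : ℕ} (f : Fin n → ℝ) (π : Equiv.Perm (Fin n)) (r : ℕ) : ℝ :=
  if h : r < n then f (π ⟨r, h⟩) else 0

/-- `π` lists the players in decreasing order of their bids `b`,
breaking ties according to the fixed priority order `prio` (lower `prio` = higher priority). -/
def IsBidOrder {n : ℕ} (b : Fin n → ℝ) (prio : Fin n → ℕ) (π : Equiv.Perm (Fin n)) : Prop :=
  ∀ r r' : Fin n, r < r' →
    b (π r) > b (π r') ∨ (b (π r) = b (π r') ∧ prio (π r) < prio (π r'))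

/-- BCP: set of slots still unassigned before the player of rank `r` is processed.
The player of rank `r` pays the next lower bid `rb (r+1)` per click and takes the highest
(affordable w.r.t. his budget-bid `rg r`) free slot. Slots are indexed by decreasing CTR. -/
noncomputable def bcpAvail {k : ℕ} (θ : Fin k → ℝ) (rb rg : ℕ → ℝ) : ℕ → Finset (Fin k)
  | 0 => Finset.univ
  | r + 1 =>
    let F := (bcpAvail θ rb rg r).filter fun s => θ s * rb (r + 1) ≤ rg r
    if h : F.Nonempty then (bcpAvail θ rb rg r).erase (F.min' h) else bcpAvail θ rb rg r

/-- BCP: the slot assigned to the player of rank `r` (or `none`). -/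
noncomputable def bcpSlot {k : ℕ} (θ : Fin k → ℝ) (rb rg : ℕ → ℝ) (r : ℕ) : Option (Fin k) :=
  let F := (bcpAvail θ rb rg r).filter fun s => θ s * rb (r + 1) ≤ rg r
  if h : F.Nonempty then some (F.min' h) else none

/-- Utility (in `EReal`, so that budget violation can be `⊥ = -∞`) of player `i` under BCP
with value-bids `b`, budget-bids `g`, bid order `π`, true values `v` and true budgets `B`. -/
noncomputable def bcpUtil {n k : ℕ} (θ : Fin k → ℝ) (v B b g : Fin n → ℝ)
    (π : Equiv.Perm (Fin n)) (i : Fin n) : EReal :=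
  let r := (π.symm i : ℕ)
  let p := rankVal b π (r + 1)
  match bcpSlot θ (rankVal b π) (rankVal g π) r with
  | none => 0
  | some s => if θ s * p ≤ B i then ((θ s * (v i - p) : ℝ) : EReal) else ⊥

/-! With a single slot, BCP hands it to the first player in bid order who can afford it at the
next lower bid. With bids `(5, 4)` player 1 pays `4`; by underbidding to `3.5` he lets player 2
(budget `3`) rank first, who cannot afford the price `3.5`, and player 1, now last, gets the slot
for free. -/

theorem isBidOrder_of_strictAnti {n : ℕ} {b : Fin n → ℝ} (prio : Fin n → ℕ)
    {π : Equiv.Perm (Fin n)} (h : StrictAnti (b ∘ π)) : IsBidOrder b prio π :=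
  fun _ _ hr => Or.inl (h hr)

section bcp

variable {k : ℕ} (θ : Fin k → ℝ) (rb rg : ℕ → ℝ)

theorem bcpSlot_eq_some_iff (r : ℕ) (s : Fin k) :
    bcpSlot θ rb rg r = some s ↔
      IsLeast {t | t ∈ bcpAvail θ rb rg r ∧ θ t * rb (r + 1) ≤ rg r} s := by
  dsimp only [bcpSlot]
  split_ifs with hF
  · have hleast := Finset.isLeast_min' _ hF
    rw [Finset.coe_filter] at hleast
    exact ⟨fun h => Option.some_injective _ h ▸ hleast,
      fun h => congrArg some (hleast.unique h)⟩
  · refine ⟨False.elim, fun h => (hF ⟨s, ?_⟩).elim⟩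
    exact Finset.mem_filter.2 h.1

theorem bcpSlot_eq_none_iff (r : ℕ) :
    bcpSlot θ rb rg r = none ↔ ∀ s ∈ bcpAvail θ rb rg r, rg r < θ s * rb (r + 1) := by
  dsimp only [bcpSlot]
  split_ifs with hF
  · obtain ⟨s, hs⟩ := hF
    rw [Finset.mem_filter] at hs
    simpa using ⟨s, hs.1, hs.2⟩
  · simpa [Finset.filter_nonempty_iff] using hF

theorem bcpAvail_succ_of_bcpSlot_eq_none {r : ℕ} (h : bcpSlot θ rb rg r = none) :
    bcpAvail θ rb rg (r + 1) = bcpAvail θ rb rg r := by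
  dsimp only [bcpSlot] at h
  rw [bcpAvail]
  split_ifs at h ⊢
  rfl

end bcp

section oneSlot

variable (θ : Fin 1 → ℝ) (rb rg : ℕ → ℝ)

theorem bcpSlot_eq_some_zero_of_mem {r : ℕ} (hmem : 0 ∈ bcpAvail θ rb rg r)
    (h : θ 0 * rb (r + 1) ≤ rg r) : bcpSlot θ rb rg r = some 0 :=
  (bcpSlot_eq_some_iff θ rb rg r 0).2 ⟨⟨hmem, h⟩, fun t _ => Fin.zero_le t⟩

theorem bcpSlot_zero_eq_some (h : θ 0 * rb 1 ≤ rg 0) : bcpSlot θ rb rg 0 = some 0 :=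
  bcpSlot_eq_some_zero_of_mem θ rb rg (Finset.mem_univ 0) h

theorem bcpSlot_zero_eq_none (h : rg 0 < θ 0 * rb 1) : bcpSlot θ rb rg 0 = none :=
  (bcpSlot_eq_none_iff θ rb rg 0).2 fun s _ => Subsingleton.elim s 0 ▸ h

theorem bcpSlot_one_eq_some (h₀ : rg 0 < θ 0 * rb 1) (h₁ : θ 0 * rb 2 ≤ rg 1) :
    bcpSlot θ rb rg 1 = some 0 := by
  refine bcpSlot_eq_some_zero_of_mem θ rb rg ?_ h₁
  rw [bcpAvail_succ_of_bcpSlot_eq_none θ rb rg (bcpSlot_zero_eq_none θ rb rg h₀)]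
  exact Finset.mem_univ 0

end oneSlot

theorem bcpUtil_of_bcpSlot_eq_some {n k : ℕ} {θ : Fin k → ℝ} {v B b g : Fin n → ℝ}
    {π : Equiv.Perm (Fin n)} {i : Fin n} {r : ℕ} {s : Fin k} (hr : (π.symm i : ℕ) = r)
    (hs : bcpSlot θ (rankVal b π) (rankVal g π) r = some s)
    (hB : θ s * rankVal b π (r + 1) ≤ B i) :
    bcpUtil θ v B b g π i = ((θ s * (v i - rankVal b π (r + 1)) : ℝ) : EReal) := by
  dsimp only [bcpUtil]
  rw [hr, hs]
  exact if_pos hB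

/-- BCP with one slot (`θ1 = 1`), two players with values `(10, 5)`, budgets `(5, 3)` and
true budget-bids: the bid profile `(5, 4)` (bid order = identity) gives player 1 the slot at
price `4`, which is an envy-free outcome (player 1 is within budget with nonnegative
utility, and player 2 cannot afford the slot at price `4`), yet it is not a Nash
equilibrium: deviating to bid `3.5` (so that player 2 bids highest but cannot afford the
slot at price `3.5`, and player 1 then gets the slot at price `0`) strictly improves
player 1's utility. -/
theorem bcp_envy_free_not_nash :
    IsBidOrder ![(5 : ℝ), 4] (fun i => (i : ℕ)) 1 ∧
    bcpSlot ![(1 : ℝ)] (rankVal ![(5 : ℝ), 4] 1) (rankVal ![(5 : ℝ), 3] 1) 0 = some 0 ∧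
    rankVal ![(5 : ℝ), 4] 1 1 = 4 ∧
    -- envy-freeness of this outcome:
    (![(1 : ℝ)]) 0 * 4 ≤ (![(5 : ℝ), 3]) 0 ∧
    0 ≤ (![(1 : ℝ)]) 0 * ((![(10 : ℝ), 5]) 0 - 4) ∧
    ((![(1 : ℝ)]) 0 * 4 ≤ (![(5 : ℝ), 3]) 1 → (0 : ℝ) ≥ (![(1 : ℝ)]) 0 * ((![(10 : ℝ), 5]) 1 - 4)) ∧
    -- the deviation of player 1 to bid 3.5 and its outcome:
    IsBidOrder (Function.update ![(5 : ℝ), 4] 0 3.5) (fun i => (i : ℕ)) (Equiv.swap 0 1) ∧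
    bcpSlot ![(1 : ℝ)] (rankVal (Function.update ![(5 : ℝ), 4] 0 3.5) (Equiv.swap 0 1))
        (rankVal ![(5 : ℝ), 3] (Equiv.swap 0 1)) 0 = none ∧
    bcpSlot ![(1 : ℝ)] (rankVal (Function.update ![(5 : ℝ), 4] 0 3.5) (Equiv.swap 0 1))
        (rankVal ![(5 : ℝ), 3] (Equiv.swap 0 1)) 1 = some 0 ∧
    -- strict improvement for player 1, so the original profile is not a Nash equilibrium:
    bcpUtil ![(1 : ℝ)] ![(10 : ℝ), 5] ![(5 : ℝ), 3] ![(5 : ℝ), 4] ![(5 : ℝ), 3] 1 0 <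
      bcpUtil ![(1 : ℝ)] ![(10 : ℝ), 5] ![(5 : ℝ), 3] (Function.update ![(5 : ℝ), 4] 0 3.5)
        ![(5 : ℝ), 3] (Equiv.swap 0 1) 0 := by
  set b' := Function.update ![(5 : ℝ), 4] 0 3.5
  have hb'₀ : b' 0 = 3.5 := Function.update_self ..
  have hb'₁ : b' 1 = 4 := Function.update_of_ne (by decide) ..
  have hprice : rankVal ![(5 : ℝ), 4] 1 1 = 4 := by simp [rankVal]
  have hbudget : rankVal ![(5 : ℝ), 3] 1 0 = 5 := by simp [rankVal]
  have hprice'₀ : rankVal b' (Equiv.swap 0 1) 1 = 3.5 := by simp [rankVal, hb'₀]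
  have hprice'₁ : rankVal b' (Equiv.swap 0 1) 2 = 0 := by simp [rankVal]
  have hbudget'₀ : rankVal ![(5 : ℝ), 3] (Equiv.swap 0 1) 0 = 3 := by simp [rankVal]
  have hbudget'₁ : rankVal ![(5 : ℝ), 3] (Equiv.swap 0 1) 1 = 5 := by simp [rankVal]
  have hwin :
      bcpSlot ![(1 : ℝ)] (rankVal ![(5 : ℝ), 4] 1) (rankVal ![(5 : ℝ), 3] 1) 0 = some 0 :=
    bcpSlot_zero_eq_some _ _ _ (by norm_num [hprice, hbudget])
  have hlose' : bcpSlot ![(1 : ℝ)] (rankVal b' (Equiv.swap 0 1))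
      (rankVal ![(5 : ℝ), 3] (Equiv.swap 0 1)) 0 = none :=
    bcpSlot_zero_eq_none _ _ _ (by norm_num [hprice'₀, hbudget'₀])
  have hwin' : bcpSlot ![(1 : ℝ)] (rankVal b' (Equiv.swap 0 1))
      (rankVal ![(5 : ℝ), 3] (Equiv.swap 0 1)) 1 = some 0 :=
    bcpSlot_one_eq_some _ _ _ (by norm_num [hprice'₀, hbudget'₀])
      (by norm_num [hprice'₁, hbudget'₁])
  refine ⟨isBidOrder_of_strictAnti _ ?_, hwin, hprice, by norm_num, by norm_num, by norm_num,
    isBidOrder_of_strictAnti _ ?_, hlose', hwin', ?_⟩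
  · exact Fin.strictAnti_iff_succ_lt.2 fun i => by fin_cases i; norm_num
  · exact Fin.strictAnti_iff_succ_lt.2 fun i => by fin_cases i; norm_num [hb'₀, hb'₁]
  · rw [bcpUtil_of_bcpSlot_eq_some (by decide) hwin (by norm_num [hprice]),
      bcpUtil_of_bcpSlot_eq_some (by decide) hwin' (by norm_num [hprice'₁])]
    norm_num [hprice, hprice'₁]
end

section
/- Given any envy-free assignment with allocation s(·) (with π(i) the player at slot i) and prices p(·), the bid profile defined by b_{π(i)} = p(π(i−1))·θ_{i−1}/θ_i and g_{π(i)} = θ_{i−1}·p(π(i−1)) for i = 2, …, k+1 (with b_{π(1)} sufficiently large and losing players bidding lower) causes the BCBO mechanism to assign player π(i) to slot i at price p(π(i)) for each i = 1, …, k. -/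
/-- Under BCBO, the bid profile constructed from an envy-free assignment (with `π i = a i`
the player at slot `i`): `b (a i) = p (a (i-1)) * θ (i-1) / θ i` and
`g (a i) = θ (i-1) * p (a (i-1))` for `i = 1, …, k-1`, the extra `(k+1)`-st player `w`
getting `g w = θ (k-1) * p (k-1)` and a sufficiently high bid, `b (a 0)` sufficiently large
with `g (a 0) = θ 0 * b (a 0)`, and losing players bidding lower — causes BCBO (which awards
each slot `s`, from highest CTR down, to the unassigned player maximizing
`min (b i) (g i / θ s)` and charges the second largest such value) to assign the player
`a i` to slot `i` at price `p i`, for every slot `i`. -/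
theorem bcbo_realizes_envy_free {n k : ℕ} (hkn : k < n) (hk : 0 < k)
    (θ : Fin k → ℝ) (v B : Fin n → ℝ)
    (hθpos : ∀ j, 0 < θ j) (hθ : StrictAnti θ)
    (a : Fin k → Fin n) (p : Fin k → ℝ) (ha : Function.Injective a) (hp : ∀ j, 0 ≤ p j)
    -- envy-free conditions:
    (hbudget : ∀ j, θ j * p j ≤ B (a j))
    (hrat : ∀ j, 0 ≤ θ j * (v (a j) - p j))
    (hef : ∀ j j' : Fin k, θ j' * p j' ≤ B (a j) →
      θ j * (v (a j) - p j) ≥ θ j' * (v (a j) - p j'))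
    (hefu : ∀ i : Fin n, (∀ j, a j ≠ i) → ∀ j' : Fin k, θ j' * p j' ≤ B i →
      (0 : ℝ) ≥ θ j' * (v i - p j'))
    -- the extra (k+1)-st player, unassigned in the envy-free assignment:
    (w : Fin n) (hw : ∀ j, a j ≠ w)
    -- the constructed bids:
    (b g : Fin n → ℝ)
    (hb0 : ∀ j : Fin k, p j ≤ b (a ⟨0, hk⟩))
    (hg0 : g (a ⟨0, hk⟩) = θ ⟨0, hk⟩ * b (a ⟨0, hk⟩))
    (hb : ∀ r : ℕ, (h : r + 1 < k) →
      b (a ⟨r + 1, h⟩) = p ⟨r, Nat.lt_of_succ_lt h⟩ * θ ⟨r, Nat.lt_of_succ_lt h⟩ / θ ⟨r + 1, h⟩)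
    (hg : ∀ r : ℕ, (h : r + 1 < k) →
      g (a ⟨r + 1, h⟩) = θ ⟨r, Nat.lt_of_succ_lt h⟩ * p ⟨r, Nat.lt_of_succ_lt h⟩)
    (hgw : g w = θ ⟨k - 1, Nat.sub_lt hk one_pos⟩ * p ⟨k - 1, Nat.sub_lt hk one_pos⟩)
    (hbw : p ⟨k - 1, Nat.sub_lt hk one_pos⟩ ≤ b w)
    (hrest : ∀ i : Fin n, (∀ j, a j ≠ i) → i ≠ w → b i ≤ b w ∧ g i ≤ g w) :
    -- BCBO assigns player `a j` to slot `j` at price `p j`, for every slot `j`: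
    ∀ j : Fin k,
      (∀ i : Fin n, (∀ j' : Fin k, j' < j → a j' ≠ i) →
        min (b i) (g i / θ j) ≤ min (b (a j)) (g (a j) / θ j)) ∧
      (∀ i : Fin n, (∀ j' : Fin k, j' < j → a j' ≠ i) → i ≠ a j →
        min (b i) (g i / θ j) ≤ p j) ∧
      (∃ i : Fin n, (∀ j' : Fin k, j' < j → a j' ≠ i) ∧ i ≠ a j ∧
        min (b i) (g i / θ j) = p j) := by
  have hv : ∀ j : Fin k, 0 ≤ v (a j) := by
    intro j
    have h1 := hrat j
    have h2 := hθpos j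
    have h3 := hp j
    nlinarith
  have mono : ∀ r s : Fin k, r ≤ s → θ s * p s ≤ θ r * p r := by
    intro r s hrs
    rcases hrs.lt_or_eq with h | rfl
    · by_contra hcon
      push_neg at hcon
      have hB : θ r * p r ≤ B (a s) := le_trans hcon.le (hbudget s)
      have hefrs := hef s r hB
      have hθrs : θ s < θ r := hθ h
      have hvs := hv s
      nlinarith [mul_nonneg (sub_nonneg.mpr hθrs.le) hvs]
    · exact le_refl _
  intro j
  have hθj := hθpos j
  have hwb : g w / θ j ≤ p j := by
    rw [hgw, div_le_iff₀ (hθpos j)]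
    have hm := mono j ⟨k - 1, Nat.sub_lt hk one_pos⟩
      (by have := j.isLt; rw [Fin.le_def]; show j.val ≤ k - 1; omega)
    linarith [hm]
  have key : ∀ i : Fin n, (∀ j' : Fin k, j' < j → a j' ≠ i) → i ≠ a j →
      min (b i) (g i / θ j) ≤ p j := by
    intro i hi hne
    by_cases hc : ∃ j'', a j'' = i
    · obtain ⟨j'', rfl⟩ := hc
      have hjj : j < j'' := by
        rcases lt_trichotomy j'' j with h | h | h
        · exact absurd rfl (hi j'' h)
        · exact absurd (congrArg a h) hne
        · exact h
      have hjv : j.val < j''.val := hjj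
      obtain ⟨s, hs⟩ : ∃ s, j''.val = s + 1 := ⟨j''.val - 1, by omega⟩
      have hsk : s + 1 < k := hs ▸ j''.isLt
      have hj'' : j'' = ⟨s + 1, hsk⟩ := Fin.ext hs
      have hm := mono j ⟨s, Nat.lt_of_succ_lt hsk⟩ (by rw [Fin.le_def]; show j.val ≤ s; omega)
      calc min (b (a j'')) (g (a j'') / θ j) ≤ g (a j'') / θ j := min_le_right _ _
        _ ≤ p j := by
            rw [hj'', hg s hsk, div_le_iff₀ (hθpos j)]
            linarith [hm]
    · push_neg at hc
      by_cases hiw : i = w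
      · subst hiw
        exact le_trans (min_le_right _ _) hwb
      · obtain ⟨hbi, hgi⟩ := hrest i hc hiw
        refine le_trans (min_le_right _ _) (le_trans ?_ hwb)
        exact div_le_div_of_nonneg_right hgi hθj.le
  have low : p j ≤ min (b (a j)) (g (a j) / θ j) := by
    rcases Nat.eq_zero_or_pos j.val with h0 | hpos
    · have hj0 : j = ⟨0, hk⟩ := Fin.ext h0
      rw [hj0, hg0, mul_div_cancel_left₀ _ (hθpos _).ne', min_self]
      exact hb0 _
    · obtain ⟨r, hr⟩ : ∃ r, j.val = r + 1 := ⟨j.val - 1, by omega⟩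
      have hrk : r + 1 < k := hr ▸ j.isLt
      have hj1 : j = ⟨r + 1, hrk⟩ := Fin.ext hr
      have hm := mono ⟨r, Nat.lt_of_succ_lt hrk⟩ ⟨r + 1, hrk⟩
        (by rw [Fin.le_def]; exact Nat.le_succ r)
      rw [hj1, hb r hrk, hg r hrk]
      apply le_min
      · rw [le_div_iff₀ (hθpos _)]; linarith [hm]
      · rw [le_div_iff₀ (hθpos _)]; linarith [hm]
  refine ⟨?_, key, ?_⟩
  · intro i hi
    by_cases h : i = a j
    · rw [h]
    · exact le_trans (key i hi h) low
  · by_cases hjk : j.val + 1 < k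
    · refine ⟨a ⟨j.val + 1, hjk⟩, ?_, ?_, ?_⟩
      · intro j' hj' heq
        have h1 : j'.val = j.val + 1 := congrArg Fin.val (ha heq)
        have h2 : j'.val < j.val := hj'
        omega
      · intro heq
        have h1 : j.val + 1 = j.val := congrArg Fin.val (ha heq)
        omega
      · have hθle : θ ⟨j.val + 1, hjk⟩ ≤ θ j :=
          (hθ (show j < ⟨j.val + 1, hjk⟩ from by
            rw [Fin.lt_def]; exact Nat.lt_succ_self _)).le
        have e1 : g (a ⟨j.val + 1, hjk⟩) / θ j = p j := by
          rw [hg j.val hjk]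
          exact mul_div_cancel_left₀ _ (hθpos j).ne'
        have e2 : p j ≤ b (a ⟨j.val + 1, hjk⟩) := by
          rw [hb j.val hjk, le_div_iff₀ (hθpos _)]
          exact mul_le_mul_of_nonneg_left hθle (hp j)
        rw [e1]
        exact min_eq_right e2
    · have hjv : j.val = k - 1 := by have := j.isLt; omega
      refine ⟨w, fun j' _ => hw j', fun h => hw j h.symm, ?_⟩
      have hkj : (⟨k - 1, Nat.sub_lt hk one_pos⟩ : Fin k) = j := Fin.ext hjv.symm
      rw [hgw, hkj, mul_div_cancel_left₀ _ (hθpos j).ne']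
      exact min_eq_right (hkj ▸ hbw)
end
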